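/- arXiv:2411.08319 — 11 statements merged into one kernel-verified Lean document; each statement's English description precedes it below -/
import Mathlib

section
/- If σ is a nontrivial automorphism of a group G, then the quandle Euler characteristic of the generalized Alexander quandle GAlex(G,σ) equals 0; in fact, there is an element of the displacement group acting without fixed points. -/
/-- A quandle: a set with point symmetries `s x` (bijections) such that
`s x x = x` and `s x ∘ s y = s (s x y) ∘ s x`. -/
structure QuandleStr (X : Type*) where
  s : X → Equiv.Perm X
  fix : ∀ x, s x x = x
  dist : ∀ x y z, s x (s y z) = s (s x y) (s x z)

/-- The inner automorphism group of a quandle, generated by the point symmetries. -/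
def QuandleStr.Inn {X : Type*} (Q : QuandleStr X) : Subgroup (Equiv.Perm X) :=
  Subgroup.closure {g | ∃ x, g = Q.s x}

/-- The displacement group of a quandle, generated by `s x ∘ (s y)⁻¹`. -/
def QuandleStr.Dis {X : Type*} (Q : QuandleStr X) : Subgroup (Equiv.Perm X) :=
  Subgroup.closure {g | ∃ x y, g = Q.s x * (Q.s y)⁻¹}

/-- The quandle Euler characteristic: the infimum over the displacement group of the
number of fixed points. -/
noncomputable def QuandleStr.chi {X : Type*} (Q : QuandleStr X) : ℕ :=
  sInf {m | ∃ g ∈ Q.Dis, m = Nat.card {x : X // g x = x}}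

/-- The point symmetry `s h : g ↦ h σ(h⁻¹ g)` of the generalized Alexander quandle. -/
def galexS {G : Type*} [Group G] (σ : G ≃* G) (h : G) : Equiv.Perm G where
  toFun g := h * σ (h⁻¹ * g)
  invFun g := h * σ.symm (h⁻¹ * g)
  left_inv g := by simp
  right_inv g := by simp

/-- The generalized Alexander quandle `GAlex(G, σ)`. -/
def GAlex (G : Type*) [Group G] (σ : G ≃* G) : QuandleStr G where
  s := galexS σ
  fix x := by simp [galexS]
  dist x y z := by simp [galexS, map_mul, map_inv, mul_assoc]

/-- if `σ` is a nontrivial automorphism of a group `G`, then the quandle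
Euler characteristic of `GAlex(G, σ)` is `0`; in fact some element of the displacement
group acts without fixed points. -/
theorem chi_GAlex_eq_zero {G : Type*} [Group G] (σ : G ≃* G)
    (hσ : σ ≠ MulEquiv.refl G) :
    (GAlex G σ).chi = 0 ∧
    ∃ g ∈ (GAlex G σ).Dis, ∀ x : G, g x ≠ x := by
  obtain ⟨a, ha⟩ : ∃ a : G, σ a ≠ a := by
    by_contra h
    push_neg at h
    exact hσ (MulEquiv.ext h)
  set g : Equiv.Perm G := galexS σ a * (galexS σ 1)⁻¹ with hg
  have hmem : g ∈ (GAlex G σ).Dis :=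
    Subgroup.subset_closure ⟨a, 1, rfl⟩
  have hval : ∀ x : G, g x = a * σ a⁻¹ * x := by
    intro x
    show galexS σ a ((galexS σ 1)⁻¹ x) = _
    have h1 : (galexS σ 1)⁻¹ x = σ.symm x := by
      show (1 : G) * σ.symm ((1:G)⁻¹ * x) = σ.symm x
      simp
    rw [h1]
    show a * σ (a⁻¹ * σ.symm x) = a * σ a⁻¹ * x
    rw [map_mul]
    simp [mul_assoc]
  have hnf : ∀ x : G, g x ≠ x := by
    intro x hx
    rw [hval] at hx
    have h2 : a * σ a⁻¹ = 1 := mul_right_cancel (b := x) (by simpa using hx)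
    have h3 : σ a⁻¹ = a⁻¹ := by
      rwa [mul_eq_one_iff_inv_eq, eq_comm] at h2
    exact ha (by simpa using congrArg (·⁻¹) h3)
  refine ⟨?_, g, hmem, hnf⟩
  have h0 : (0 : ℕ) ∈ {m | ∃ g ∈ (GAlex G σ).Dis, m = Nat.card {x : G // g x = x}} := by
    refine ⟨g, hmem, ?_⟩
    haveI : IsEmpty {x : G // g x = x} := ⟨fun ⟨x, hx⟩ => hnf x hx⟩
    simp
  exact Nat.sInf_eq_zero.mpr (Or.inl h0)
end

section
/- The quandle Euler characteristic of the core quandle Core(G) of a nonabelian group G equals 0: if [g,h] ≠ 1, then the composition (s_{g⁻¹h⁻¹} ∘ s_1⁻¹) ∘ (s_h ∘ s_{g⁻¹}⁻¹), which sends x to x·[g,h], lies in Dis(Core(G)) and has no fixed points. -/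
/-- The point symmetry `s h : g ↦ h g⁻¹ h` of the core quandle. -/
def coreS {G : Type*} [Group G] (h : G) : Equiv.Perm G where
  toFun g := h * g⁻¹ * h
  invFun g := h * g⁻¹ * h
  left_inv g := by group
  right_inv g := by group

/-- The core quandle `Core(G)` of a group `G`. -/
def Core (G : Type*) [Group G] : QuandleStr G where
  s := coreS
  fix x := by simp [coreS]
  dist x y z := by simp [coreS]; group

lemma coreS_inv {G : Type*} [Group G] (a : G) : (coreS a)⁻¹ = coreS a := by
  ext x; rfl

lemma key_lemma {G : Type*} [Group G] (g h : G) (hgh : g * h * g⁻¹ * h⁻¹ ≠ 1) :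
      ((coreS (g⁻¹ * h⁻¹) * (coreS (1 : G))⁻¹) * (coreS h * (coreS g⁻¹)⁻¹)) ∈ (Core G).Dis ∧
      (∀ x : G,
        ((coreS (g⁻¹ * h⁻¹) * (coreS (1 : G))⁻¹) * (coreS h * (coreS g⁻¹)⁻¹)) x
          = x * (g * h * g⁻¹ * h⁻¹)) ∧
      (∀ x : G,
        ((coreS (g⁻¹ * h⁻¹) * (coreS (1 : G))⁻¹) * (coreS h * (coreS g⁻¹)⁻¹)) x ≠ x) := by
  refine ⟨?_, ?_, ?_⟩
  · exact Subgroup.mul_mem _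
      (Subgroup.subset_closure ⟨g⁻¹ * h⁻¹, 1, rfl⟩)
      (Subgroup.subset_closure ⟨h, g⁻¹, rfl⟩)
  · intro x
    rw [coreS_inv, coreS_inv]
    simp only [Equiv.Perm.mul_apply, coreS, Equiv.coe_fn_mk]
    group
  · intro x hx
    rw [show ((coreS (g⁻¹ * h⁻¹) * (coreS (1 : G))⁻¹) * (coreS h * (coreS g⁻¹)⁻¹)) x
        = x * (g * h * g⁻¹ * h⁻¹) by
      rw [coreS_inv, coreS_inv]
      simp only [Equiv.Perm.mul_apply, coreS, Equiv.coe_fn_mk]; group] at hx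
    exact hgh (mul_left_cancel (a := x) (by rw [hx, mul_one]))

/-- for a nonabelian group `G`, the quandle Euler characteristic of
`Core(G)` is `0`: whenever `[g,h] ≠ 1`, the composition
`(s_{g⁻¹h⁻¹} ∘ s_1⁻¹) ∘ (s_h ∘ s_{g⁻¹}⁻¹)` lies in the displacement group, sends
`x` to `x·[g,h]`, and has no fixed points. -/
theorem chi_core_nonabelian {G : Type*} [Group G]
    (hG : ∃ g h : G, g * h * g⁻¹ * h⁻¹ ≠ 1) :
    (Core G).chi = 0 ∧
    ∀ g h : G, g * h * g⁻¹ * h⁻¹ ≠ 1 →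
      ((coreS (g⁻¹ * h⁻¹) * (coreS (1 : G))⁻¹) * (coreS h * (coreS g⁻¹)⁻¹)) ∈ (Core G).Dis ∧
      (∀ x : G,
        ((coreS (g⁻¹ * h⁻¹) * (coreS (1 : G))⁻¹) * (coreS h * (coreS g⁻¹)⁻¹)) x
          = x * (g * h * g⁻¹ * h⁻¹)) ∧
      (∀ x : G,
        ((coreS (g⁻¹ * h⁻¹) * (coreS (1 : G))⁻¹) * (coreS h * (coreS g⁻¹)⁻¹)) x ≠ x) := by
  refine ⟨?_, fun g h hgh => key_lemma g h hgh⟩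
  obtain ⟨g, h, hgh⟩ := hG
  obtain ⟨hmem, -, hnofix⟩ := key_lemma g h hgh
  apply Nat.sInf_eq_zero.mpr
  left
  refine ⟨_, hmem, ?_⟩
  symm
  rw [Nat.card_eq_zero]
  left
  exact ⟨fun ⟨x, hx⟩ => hnofix x hx⟩
end

section
/- Under the representation sending s_{e_i} to the diagonal matrix with 1 in position i and −1 elsewhere, the displacement group of the discrete n-sphere DS^n corresponds exactly to the set of diagonal matrices with entries ±1 and determinant 1. -/
/-- The image `ρ(s_{e_i})`: the diagonal matrix with `1` in position `i` and `-1`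
elsewhere. -/
def Mdiag (n : ℕ) (i : Fin (n + 1)) : Matrix (Fin (n + 1)) (Fin (n + 1)) ℝ :=
  Matrix.diagonal (fun j => if j = i then (1 : ℝ) else -1)

lemma Mdiag_mul_self (n : ℕ) (i : Fin (n + 1)) : Mdiag n i * Mdiag n i = 1 := by
  rw [Mdiag, Matrix.diagonal_mul_diagonal, ← Matrix.diagonal_one]
  apply congrArg Matrix.diagonal
  funext j
  by_cases h : j = i <;> simp [h]

/-- `ρ(s_{e_i})` as a unit of the matrix ring (it is its own inverse). -/
def MdiagUnit (n : ℕ) (i : Fin (n + 1)) : (Matrix (Fin (n + 1)) (Fin (n + 1)) ℝ)ˣ :=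
  ⟨Mdiag n i, Mdiag n i, Mdiag_mul_self n i, Mdiag_mul_self n i⟩

lemma det_Mdiag (n : ℕ) (i : Fin (n + 1)) : (Mdiag n i).det = (-1 : ℝ) ^ n := by
  rw [Mdiag, Matrix.det_diagonal]
  rw [← Finset.mul_prod_erase _ _ (Finset.mem_univ i), if_pos rfl, one_mul]
  rw [Finset.prod_congr rfl (fun k hk => if_neg (Finset.ne_of_mem_erase hk))]
  simp [Finset.card_erase_of_mem]

lemma val_MdiagUnit_inv (n : ℕ) (i : Fin (n + 1)) :
    ((MdiagUnit n i)⁻¹ : (Matrix (Fin (n + 1)) (Fin (n + 1)) ℝ)ˣ) = (Mdiag n i : Matrix _ _ ℝ) := rfl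

/-- The target subgroup: diagonal ±1 matrices with determinant 1. -/
def diagSubgroup (n : ℕ) : Subgroup (Matrix (Fin (n + 1)) (Fin (n + 1)) ℝ)ˣ where
  carrier := {u | ∃ ε : Fin (n + 1) → ℝ, (∀ k, ε k = 1 ∨ ε k = -1) ∧
      (u : Matrix (Fin (n + 1)) (Fin (n + 1)) ℝ) = Matrix.diagonal ε ∧
      (u : Matrix (Fin (n + 1)) (Fin (n + 1)) ℝ).det = 1}
  one_mem' := ⟨fun _ => 1, fun _ => Or.inl rfl, by simp, by simp⟩
  mul_mem' := by
    rintro a b ⟨ε, hε, ha, hda⟩ ⟨δ, hδ, hb, hdb⟩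
    refine ⟨fun k => ε k * δ k, fun k => ?_, ?_, ?_⟩
    · rcases hε k with h | h <;> rcases hδ k with h' | h' <;> simp [h, h']
    · rw [Units.val_mul, ha, hb, Matrix.diagonal_mul_diagonal]
    · rw [Units.val_mul, Matrix.det_mul, hda, hdb, one_mul]
  inv_mem' := by
    rintro u ⟨ε, hε, hu, hd⟩
    have hsq : (u : Matrix (Fin (n + 1)) (Fin (n + 1)) ℝ) * u = 1 := by
      rw [hu, Matrix.diagonal_mul_diagonal, ← Matrix.diagonal_one]
      apply congrArg Matrix.diagonal
      funext k
      rcases hε k with h | h <;> simp [h]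
    have huu : u * u = 1 := Units.ext (by simpa using hsq)
    have hinv : u⁻¹ = u := inv_eq_of_mul_eq_one_left huu
    exact ⟨ε, hε, by rw [hinv]; exact hu, by rw [hinv]; exact hd⟩

lemma gen_mem (n : ℕ) (i j : Fin (n + 1)) :
    MdiagUnit n i * (MdiagUnit n j)⁻¹ ∈ diagSubgroup n := by
  refine ⟨fun k => (if k = i then (1 : ℝ) else -1) * (if k = j then 1 else -1),
    fun k => ?_, ?_, ?_⟩
  · simp only []; split_ifs <;> norm_num
  · rw [Units.val_mul, val_MdiagUnit_inv]
    show Mdiag n i * Mdiag n j = _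
    rw [Mdiag, Mdiag, Matrix.diagonal_mul_diagonal]
  · rw [Units.val_mul, val_MdiagUnit_inv]
    show (Mdiag n i * Mdiag n j).det = 1
    rw [Matrix.det_mul, det_Mdiag, det_Mdiag, ← mul_pow, neg_mul_neg, one_mul, one_pow]

lemma key (n : ℕ) : ∀ m (T : Finset (Fin (n + 1))), T.card = m → Even m →
    ∀ u : (Matrix (Fin (n + 1)) (Fin (n + 1)) ℝ)ˣ,
    (u : Matrix (Fin (n + 1)) (Fin (n + 1)) ℝ)
      = Matrix.diagonal (fun k => if k ∈ T then (-1 : ℝ) else 1) →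
    u ∈ Subgroup.closure {u : (Matrix (Fin (n + 1)) (Fin (n + 1)) ℝ)ˣ |
        ∃ i j : Fin (n + 1), u = MdiagUnit n i * (MdiagUnit n j)⁻¹} := by
  intro m
  induction m using Nat.strong_induction_on with
  | _ m ih =>
  intro T hT hEven u hu
  rcases Nat.eq_zero_or_pos m with h0 | hpos
  · subst h0
    have hTe : T = ∅ := Finset.card_eq_zero.mp hT
    subst hTe
    have h1 : (u : Matrix (Fin (n + 1)) (Fin (n + 1)) ℝ) = 1 := by
      rw [hu, ← Matrix.diagonal_one]
      exact congrArg Matrix.diagonal (by funext k; simp)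
    have : u = 1 := Units.ext (by simpa using h1)
    rw [this]; exact one_mem _
  · -- T is nonempty, pick i; since m is even, m ≥ 2, pick j ≠ i in T
    obtain ⟨i, hi⟩ := Finset.card_pos.mp (hT ▸ hpos)
    have hm2 : 2 ≤ m := by
      rcases hEven with ⟨r, hr⟩; omega
    have hcard_erase : (T.erase i).card = m - 1 := by
      rw [Finset.card_erase_of_mem hi, hT]
    have hpos' : 0 < (T.erase i).card := by omega
    obtain ⟨j, hj⟩ := Finset.card_pos.mp hpos'
    have hji : j ≠ i := Finset.ne_of_mem_erase hj
    have hjT : j ∈ T := Finset.mem_of_mem_erase hj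
    set T' : Finset (Fin (n + 1)) := (T.erase i).erase j with hT'def
    have hcard' : T'.card = m - 2 := by
      rw [hT'def, Finset.card_erase_of_mem hj, hcard_erase]; omega
    set D : (Matrix (Fin (n + 1)) (Fin (n + 1)) ℝ)ˣ := MdiagUnit n i * (MdiagUnit n j)⁻¹ with hD
    have hDval : ((D⁻¹ : (Matrix (Fin (n + 1)) (Fin (n + 1)) ℝ)ˣ) : Matrix _ _ ℝ)
        = Mdiag n j * Mdiag n i := by
      rw [hD, mul_inv_rev, inv_inv, Units.val_mul, val_MdiagUnit_inv]; rfl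
    set u' : (Matrix (Fin (n + 1)) (Fin (n + 1)) ℝ)ˣ := D⁻¹ * u with hu'
    have hu'val : (u' : Matrix (Fin (n + 1)) (Fin (n + 1)) ℝ)
        = Matrix.diagonal (fun k => if k ∈ T' then (-1 : ℝ) else 1) := by
      rw [hu', Units.val_mul, hDval, hu, Mdiag, Mdiag, Matrix.diagonal_mul_diagonal,
        Matrix.diagonal_mul_diagonal]
      apply congrArg Matrix.diagonal
      funext k
      have hk' : k ∈ T' ↔ k ∈ T ∧ k ≠ j ∧ k ≠ i := by
        rw [hT'def, Finset.mem_erase, Finset.mem_erase]; tauto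
      by_cases h1 : k = i
      · subst h1
        simp [hji.symm, hi, hk']
      · by_cases h2 : k = j
        · subst h2
          simp [hji, hjT, hk']
        · by_cases h3 : k ∈ T <;> simp [h1, h2, h3, hk']
    have hmem' : u' ∈ Subgroup.closure {u : (Matrix (Fin (n + 1)) (Fin (n + 1)) ℝ)ˣ |
        ∃ i j : Fin (n + 1), u = MdiagUnit n i * (MdiagUnit n j)⁻¹} :=
      ih (m - 2) (by omega) T' hcard' (by rcases hEven with ⟨r, hr⟩; exact ⟨r - 1, by omega⟩)
        u' hu'val
    have hDmem : D ∈ Subgroup.closure {u : (Matrix (Fin (n + 1)) (Fin (n + 1)) ℝ)ˣ |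
        ∃ i j : Fin (n + 1), u = MdiagUnit n i * (MdiagUnit n j)⁻¹} :=
      Subgroup.subset_closure ⟨i, j, rfl⟩
    have : u = D * u' := by rw [hu', mul_inv_cancel_left]
    rw [this]
    exact mul_mem hDmem hmem'

/-- under the representation `ρ(s_{e_i}) = Mdiag n i`, the displacement
group of the discrete `n`-sphere, i.e. the group generated by
`ρ(s_{e_i}) ρ(s_{e_j})⁻¹`, is exactly the set of diagonal matrices with entries `±1`
and determinant `1`. -/
theorem discrete_sphere_dis_eq_diag_det_one (n : ℕ) :
    (Subgroup.closure {u : (Matrix (Fin (n + 1)) (Fin (n + 1)) ℝ)ˣ |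
        ∃ i j : Fin (n + 1), u = MdiagUnit n i * (MdiagUnit n j)⁻¹} :
      Set (Matrix (Fin (n + 1)) (Fin (n + 1)) ℝ)ˣ)
    = {u : (Matrix (Fin (n + 1)) (Fin (n + 1)) ℝ)ˣ |
        ∃ ε : Fin (n + 1) → ℝ, (∀ k, ε k = 1 ∨ ε k = -1) ∧
          (u : Matrix (Fin (n + 1)) (Fin (n + 1)) ℝ) = Matrix.diagonal ε ∧
          (u : Matrix (Fin (n + 1)) (Fin (n + 1)) ℝ).det = 1} := by
  apply Set.Subset.antisymm
  · have hle : Subgroup.closure {u : (Matrix (Fin (n + 1)) (Fin (n + 1)) ℝ)ˣ |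
        ∃ i j : Fin (n + 1), u = MdiagUnit n i * (MdiagUnit n j)⁻¹} ≤ diagSubgroup n := by
      rw [Subgroup.closure_le]
      rintro u ⟨i, j, rfl⟩
      exact gen_mem n i j
    exact fun u hu => hle hu
  · rintro u ⟨ε, hε, hu, hd⟩
    set T : Finset (Fin (n + 1)) := Finset.univ.filter (fun k => ε k = -1) with hTdef
    have hεT : ε = fun k => if k ∈ T then (-1 : ℝ) else 1 := by
      funext k
      have : k ∈ T ↔ ε k = -1 := by simp [hTdef]
      rcases hε k with h | h
      · rw [h, if_neg]; rw [this, h]; norm_num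
      · rw [h, if_pos (this.mpr h)]
    have hprod : (-1 : ℝ) ^ T.card = 1 := by
      have : (u : Matrix (Fin (n + 1)) (Fin (n + 1)) ℝ).det
          = ∏ k : Fin (n + 1), ε k := by rw [hu, Matrix.det_diagonal]
      rw [hd] at this
      rw [hεT] at this
      rw [Finset.prod_ite_mem, Finset.univ_inter, Finset.prod_const] at this
      exact this.symm
    have hEven : Even T.card := by
      by_contra hodd
      rw [Odd.neg_one_pow (Nat.not_even_iff_odd.mp hodd)] at hprod
      norm_num at hprod
    exact key n T.card T rfl hEven u (by rw [hu, hεT])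
end

section
/- For odd n, the quandle Euler characteristic of the discrete n-sphere DS^n equals 0. -/
/-- The point symmetry `s (v,a) : (w,b) ↦ (w, d v w + b)` of the quandle obtained
from an `A`-weighted graph. -/
def graphS {V A : Type*} [AddGroup A] (d : V → V → A) (p : V × A) : Equiv.Perm (V × A) where
  toFun q := (q.1, d p.1 q.1 + q.2)
  invFun q := (q.1, -d p.1 q.1 + q.2)
  left_inv q := by simp
  right_inv q := by simp [← add_assoc]

/-- The quandle `V ×_d A` obtained from an `A`-weighted graph `(V, A, d)`. -/
def graphQuandle (V A : Type*) [AddCommGroup A] (d : V → V → A) (hd : ∀ v, d v v = 0) :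
    QuandleStr (V × A) where
  s := graphS d
  fix p := by cases p with | mk v a => simp [graphS, hd]
  dist p q r := by simp [graphS, add_left_comm]

/-- The weight function of the discrete `n`-sphere: the point `(i, ε)` encodes
`(-1)^ε e_i`, and `s_{e_i}` fixes `±e_i` while flipping the sign of `±e_j` (`j ≠ i`). -/
def dSphere (n : ℕ) : Fin (n + 1) → Fin (n + 1) → ZMod 2 :=
  fun i j => if i = j then 0 else 1

/-- The discrete `n`-sphere `DS^n = {±e_1, …, ±e_{n+1}}` as a quandle, with the point
`(i, ε)` encoding `(-1)^ε e_i`. -/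
def DSQuandle (n : ℕ) : QuandleStr (Fin (n + 1) × ZMod 2) :=
  graphQuandle (Fin (n + 1)) (ZMod 2) (dSphere n) (fun v => by simp [dSphere])

open Fin.NatCast

/-- for odd `n`, the quandle Euler characteristic of the discrete
`n`-sphere is `0` (matching `χ(S^n) = 0`). -/
theorem chi_discrete_sphere_odd (n : ℕ) (hn : Odd n) :
    (DSQuandle n).chi = 0 := by
  classical
  set Q := DSQuandle n with hQ
  have hsq : ∀ p, Q.s p * Q.s p = 1 := by
    intro p
    apply Equiv.ext
    rintro ⟨j, b⟩
    show ((Q.s p) ((Q.s p) (j, b))) = (j, b)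
    show (j, dSphere n p.1 j + (dSphere n p.1 j + b)) = (j, b)
    rw [← add_assoc]
    have h2 : dSphere n p.1 j + dSphere n p.1 j = 0 := by
      unfold dSphere; split <;> decide
    rw [h2, zero_add]
  have hinv : ∀ p, (Q.s p)⁻¹ = Q.s p := fun p =>
    inv_eq_of_mul_eq_one_right (hsq p)
  have hpair : ∀ p q, Q.s p * Q.s q ∈ Q.Dis := by
    intro p q
    rw [← hinv q]
    exact Subgroup.subset_closure ⟨p, q, rfl⟩
  set f : ℕ → Equiv.Perm (Fin (n + 1) × ZMod 2) :=
    fun i => Q.s ((i : Fin (n + 1)), 0) with hf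
  set P : ℕ → Equiv.Perm (Fin (n + 1) × ZMod 2) :=
    fun m => ((List.range m).map f).prod with hP
  have hPsucc : ∀ m, P (m + 1) = P m * f m := by
    intro m
    simp [hP, List.range_succ]
  have hmem : ∀ m, P (2 * m) ∈ Q.Dis := by
    intro m
    induction m with
    | zero => simpa [hP] using Q.Dis.one_mem
    | succ m ih =>
      have e : P (2 * (m + 1)) = P (2 * m) * (f (2 * m) * f (2 * m + 1)) := by
        have h' : 2 * (m + 1) = 2 * m + 1 + 1 := by ring
        rw [h', hPsucc, hPsucc, mul_assoc]
      rw [e]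
      exact Q.Dis.mul_mem ih (hpair _ _)
  have haction : ∀ m, ∀ j b, (P m) (j, b) =
      (j, (∑ i ∈ Finset.range m, dSphere n (i : Fin (n + 1)) j) + b) := by
    intro m
    induction m with
    | zero => intro j b; simp [hP]
    | succ m ih =>
      intro j b
      rw [hPsucc]
      have step : (f m) (j, b) = (j, dSphere n (m : Fin (n + 1)) j + b) := rfl
      calc (P m * f m) (j, b)
          = (P m) ((f m) (j, b)) := rfl
        _ = (P m) (j, dSphere n (m : Fin (n + 1)) j + b) := by rw [step]
        _ = (j, (∑ i ∈ Finset.range m, dSphere n (i : Fin (n + 1)) j)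
              + (dSphere n (m : Fin (n + 1)) j + b)) := ih _ _
        _ = (j, (∑ i ∈ Finset.range (m + 1), dSphere n (i : Fin (n + 1)) j) + b) := by
              rw [Finset.sum_range_succ, add_assoc]
  have hsum : ∀ j : Fin (n + 1),
      (∑ i ∈ Finset.range (n + 1), dSphere n (i : Fin (n + 1)) j) = 1 := by
    intro j
    rw [← Fin.sum_univ_eq_sum_range (fun i => dSphere n (i : Fin (n + 1)) j)]
    simp only [Fin.cast_val_eq_self]
    have h1 : ∀ i : Fin (n + 1), dSphere n i j = 1 + (if i = j then 1 else 0) := by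
      intro i; unfold dSphere; split <;> decide
    calc (∑ i : Fin (n + 1), dSphere n i j)
        = ∑ i : Fin (n + 1), (1 + (if i = j then (1 : ZMod 2) else 0)) := by
          simp only [h1]
      _ = (∑ _i : Fin (n + 1), (1 : ZMod 2))
            + ∑ i : Fin (n + 1), (if i = j then (1 : ZMod 2) else 0) := by
          rw [Finset.sum_add_distrib]
      _ = (n + 1 : ℕ) • (1 : ZMod 2) + 1 := by
          rw [Finset.sum_const, Finset.card_univ, Fintype.card_fin,
            Finset.sum_ite_eq' Finset.univ j (fun _ => (1 : ZMod 2))]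
          simp
      _ = 1 := by
          obtain ⟨k, hk⟩ := hn
          have hcast : ((n + 1 : ℕ) : ZMod 2) = 0 := by
            have : (2 : ℕ) ∣ n + 1 := ⟨k + 1, by omega⟩
            exact (ZMod.natCast_eq_zero_iff _ _).mpr this
          rw [nsmul_eq_mul, hcast, zero_mul, zero_add]
  have hg : P (n + 1) ∈ Q.Dis := by
    obtain ⟨k, hk⟩ := hn
    have h' : n + 1 = 2 * (k + 1) := by omega
    rw [congrArg P h']
    exact hmem (k + 1)
  have hfree : ∀ q : Fin (n + 1) × ZMod 2, (P (n + 1)) q ≠ q := by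
    rintro ⟨j, b⟩ h
    rw [haction (n + 1) j b, hsum j] at h
    have h' : (1 : ZMod 2) + b = b := congrArg Prod.snd h
    rw [add_eq_right] at h'
    exact one_ne_zero h'
  have hcard : Nat.card {x : Fin (n + 1) × ZMod 2 // (P (n + 1)) x = x} = 0 := by
    have : IsEmpty {x : Fin (n + 1) × ZMod 2 // (P (n + 1)) x = x} :=
      ⟨fun ⟨x, hx⟩ => hfree x hx⟩
    exact Nat.card_of_isEmpty
  have h0 : 0 ∈ {m | ∃ g ∈ Q.Dis, m = Nat.card {x : Fin (n + 1) × ZMod 2 // g x = x}} :=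
    ⟨P (n + 1), hg, hcard.symm⟩
  exact Nat.sInf_eq_zero.mpr (Or.inl h0)
end

section
/- For even n ≥ 2, the quandle Euler characteristic of the discrete n-sphere DS^n equals 2. -/
/-- Translation permutations. -/
def tr (n : ℕ) (g : Fin (n + 1) → ZMod 2) : Equiv.Perm (Fin (n + 1) × ZMod 2) where
  toFun p := (p.1, g p.1 + p.2)
  invFun p := (p.1, g p.1 + p.2)
  left_inv p := by
    have h : ∀ x : ZMod 2, x + x = 0 := by decide
    simp [← add_assoc, h]
  right_inv p := by
    have h : ∀ x : ZMod 2, x + x = 0 := by decide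
    simp [← add_assoc, h]

lemma tr_mul (n : ℕ) (g h : Fin (n + 1) → ZMod 2) :
    tr n g * tr n h = tr n (g + h) := by
  ext p <;> simp [tr, Equiv.Perm.mul_apply, add_assoc, add_comm, add_left_comm]

lemma tr_inv (n : ℕ) (g : Fin (n + 1) → ZMod 2) : (tr n g)⁻¹ = tr n g := by
  rfl

lemma tr_zero (n : ℕ) : tr n (0 : Fin (n + 1) → ZMod 2) = 1 := by
  ext p <;> simp [tr]

lemma DSQ_s_eq (n : ℕ) (p : Fin (n + 1) × ZMod 2) :
    (DSQuandle n).s p = tr n (dSphere n p.1) := by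
  apply Equiv.ext
  intro q
  rfl

lemma sum_dSphere (n : ℕ) (i : Fin (n + 1)) :
    ∑ j, dSphere n i j = (n : ZMod 2) := by
  classical
  have h1 : ∑ j, dSphere n i j =
      ∑ j, ((1 : ZMod 2) - if i = j then 1 else 0) := by
    apply Finset.sum_congr rfl
    intro j _
    by_cases h : i = j <;> simp [dSphere, h]
  rw [h1, Finset.sum_sub_distrib, Finset.sum_ite_eq Finset.univ i (fun _ => (1 : ZMod 2))]
  simp [Finset.card_univ]

/-- Every element of the displacement group is a translation by a function summing to 0. -/
lemma dis_struct (n : ℕ) {σ : Equiv.Perm (Fin (n + 1) × ZMod 2)}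
    (hσ : σ ∈ (DSQuandle n).Dis) :
    ∃ g : Fin (n + 1) → ZMod 2, (∑ j, g j = 0) ∧ σ = tr n g := by
  classical
  induction hσ using Subgroup.closure_induction with
  | mem σ hσ =>
      obtain ⟨x, y, rfl⟩ := hσ
      refine ⟨dSphere n x.1 + dSphere n y.1, ?_, ?_⟩
      · have h : ∀ x : ZMod 2, x + x = 0 := by decide
        have := sum_dSphere n x.1
        have := sum_dSphere n y.1
        simp [Finset.sum_add_distrib, sum_dSphere, h]
      · rw [DSQ_s_eq, DSQ_s_eq, tr_inv, tr_mul]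
  | one => exact ⟨0, by simp, (tr_zero n).symm⟩
  | mul σ τ _ _ ihσ ihτ =>
      obtain ⟨g, hg, rfl⟩ := ihσ
      obtain ⟨h, hh, rfl⟩ := ihτ
      exact ⟨g + h, by simp [Finset.sum_add_distrib, hg, hh], (tr_mul n g h)⟩
  | inv σ _ ihσ =>
      obtain ⟨g, hg, rfl⟩ := ihσ
      exact ⟨g, hg, tr_inv n g⟩

lemma card_fix (n : ℕ) (g : Fin (n + 1) → ZMod 2) :
    Nat.card {x : Fin (n + 1) × ZMod 2 // tr n g x = x} =
      2 * Nat.card {j : Fin (n + 1) // g j = 0} := by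
  classical
  have key : ∀ x : Fin (n + 1) × ZMod 2, tr n g x = x ↔ g x.1 = 0 := by
    intro x
    constructor
    · intro h
      have := congrArg Prod.snd h
      simpa [tr] using this
    · intro h
      simp [tr, h]
  have e : {x : Fin (n + 1) × ZMod 2 // tr n g x = x} ≃
      {j : Fin (n + 1) // g j = 0} × ZMod 2 :=
    { toFun := fun x => (⟨x.1.1, (key x.1).mp x.2⟩, x.1.2)
      invFun := fun p => ⟨(p.1.1, p.2), (key _).mpr p.1.2⟩
      left_inv := fun x => by ext <;> rfl
      right_inv := fun p => by ext <;> rfl }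
  rw [Nat.card_congr e, Nat.card_prod]
  have : Nat.card (ZMod 2) = 2 := by simp [Nat.card_eq_fintype_card]
  rw [this]; ring

lemma gen_mem_s10 (n : ℕ) (i : Fin (n + 1)) :
    tr n (dSphere n i + dSphere n 0) ∈ (DSQuandle n).Dis := by
  have h : tr n (dSphere n i + dSphere n 0) =
      (DSQuandle n).s (i, 0) * ((DSQuandle n).s ((0 : Fin (n + 1)), 0))⁻¹ := by
    rw [DSQ_s_eq, DSQ_s_eq, tr_inv, tr_mul]
  rw [h]
  exact Subgroup.subset_closure ⟨(i, 0), ((0 : Fin (n + 1)), 0), rfl⟩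

lemma sum_gen_mem (n : ℕ) (s : Finset (Fin (n + 1))) :
    tr n (∑ i ∈ s, (dSphere n i + dSphere n 0)) ∈ (DSQuandle n).Dis := by
  classical
  induction s using Finset.induction with
  | empty => simp [tr_zero]
  | insert _ _ hx ih =>
      rw [Finset.sum_insert hx, ← tr_mul]
      exact Subgroup.mul_mem _ (gen_mem_s10 n _) ih

/-- for even `n ≥ 2`, the quandle Euler characteristic of the discrete
`n`-sphere is `2` (matching `χ(S^n) = 2`). -/
theorem chi_discrete_sphere_even (n : ℕ) (hn : Even n) (h2 : 2 ≤ n) :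
    (DSQuandle n).chi = 2 := by
  classical
  obtain ⟨k, hk⟩ := hn
  have hn2 : (n : ZMod 2) = 0 := by
    have h : (n : ZMod 2) = ((k : ZMod 2) + (k : ZMod 2)) := by
      rw [hk]; push_cast; ring
    rw [h]
    have hself : ∀ x : ZMod 2, x + x = 0 := by decide
    exact hself _
  have hadd : ∀ x : ZMod 2, x + x = 0 := by decide
  set g : Fin (n + 1) → ZMod 2 := fun j => if j = 0 then 0 else 1 with hg
  have hcard2 : Nat.card {x : Fin (n + 1) × ZMod 2 // tr n g x = x} = 2 := by
    rw [card_fix]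
    have hiff : ∀ j : Fin (n + 1), g j = 0 ↔ j = 0 := by
      intro j
      by_cases h : j = 0 <;> simp [hg, h]
    have hc : Nat.card {j : Fin (n + 1) // g j = 0} = 1 := by
      rw [Nat.card_eq_fintype_card, Fintype.card_subtype]
      rw [show (Finset.univ.filter fun j => g j = 0) = {0} by
        ext j; simp [hiff j]]
      simp
    rw [hc]
  have hcarderase : (Finset.univ.erase (0 : Fin (n + 1))).card = n := by
    rw [Finset.card_erase_of_mem (Finset.mem_univ _)]
    simp
  -- g equals the sum of generators over erase 0
  have hg_eq : g = ∑ i ∈ Finset.univ.erase (0 : Fin (n + 1)),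
      (dSphere n i + dSphere n 0) := by
    funext j
    have happ : (∑ i ∈ Finset.univ.erase (0 : Fin (n + 1)),
        (dSphere n i + dSphere n 0)) j =
        ∑ i ∈ Finset.univ.erase (0 : Fin (n + 1)),
        (dSphere n i j + dSphere n 0 j) := by
      simp
    rw [happ, Finset.sum_add_distrib, Finset.sum_const, hcarderase]
    have hconst : (n • dSphere n 0 j : ZMod 2) = 0 := by
      rw [nsmul_eq_mul, hn2, zero_mul]
    rw [hconst, add_zero]
    have hrw : ∀ i : Fin (n + 1), dSphere n i j =
        1 + (if i = j then (1 : ZMod 2) else 0) := by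
      intro i
      by_cases h : i = j <;> simp [dSphere, h]
      decide
    rw [Finset.sum_congr rfl (fun i _ => hrw i), Finset.sum_add_distrib]
    rw [Finset.sum_ite_eq' (Finset.univ.erase (0 : Fin (n + 1))) j (fun _ => (1 : ZMod 2))]
    have hones : (∑ _i ∈ Finset.univ.erase (0 : Fin (n + 1)), (1 : ZMod 2)) = 0 := by
      rw [Finset.sum_const, hcarderase, nsmul_eq_mul, hn2, zero_mul]
    rw [hones, zero_add]
    by_cases h : j = 0
    · simp [hg, h]
    · simp [hg, h, Finset.mem_erase]
  have hmem : tr n g ∈ (DSQuandle n).Dis := by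
    rw [hg_eq]
    exact sum_gen_mem n _
  have h2mem : 2 ∈ {m | ∃ σ ∈ (DSQuandle n).Dis,
      m = Nat.card {x : Fin (n + 1) × ZMod 2 // σ x = x}} :=
    ⟨tr n g, hmem, hcard2.symm⟩
  refine le_antisymm (Nat.sInf_le h2mem) ?_
  apply le_csInf ⟨2, h2mem⟩
  rintro m ⟨σ, hσ, rfl⟩
  obtain ⟨f, hf, rfl⟩ := dis_struct n hσ
  rw [card_fix]
  have hnz : ∃ j, f j = 0 := by
    by_contra hcon
    push_neg at hcon
    have hone : ∀ x : ZMod 2, x ≠ 0 → x = 1 := by decide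
    have hall : ∀ j, f j = 1 := fun j => hone _ (hcon j)
    have hsum : (∑ j, f j) = (n + 1 : ℕ) • (1 : ZMod 2) := by
      simp [hall]
    rw [hsum] at hf
    rw [nsmul_eq_mul, mul_one] at hf
    push_cast at hf
    rw [hn2, zero_add] at hf
    exact one_ne_zero hf
  obtain ⟨j, hj⟩ := hnz
  have hpos : 1 ≤ Nat.card {j : Fin (n + 1) // f j = 0} := by
    have : Nonempty {j : Fin (n + 1) // f j = 0} := ⟨⟨j, hj⟩⟩
    rw [Nat.card_eq_fintype_card]
    exact Fintype.card_pos
  omega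
end

section
/- For the quandle V_n ×_d A obtained from an A-weighted graph, identifying the inner automorphism group with a subgroup of A^n via s_{v_i} ↦ d_i (the i-th row of the adjacency matrix), the displacement group equals the subgroup { Σ_{i=1}^{n-1} k_i (d_i − d_{i+1}) : k_i ∈ ℤ } of A^n. -/
/-- The translation permutation of `V × A` given by `a : V → A`:
`(v, b) ↦ (v, b + a v)`. -/
def transPerm {V A : Type*} [AddGroup A] (a : V → A) : Equiv.Perm (V × A) where
  toFun q := (q.1, q.2 + a q.1)
  invFun q := (q.1, q.2 - a q.1)
  left_inv q := by simp
  right_inv q := by simp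

section Aux

variable {V A : Type*} [AddCommGroup A]

lemma transPerm_zero : transPerm (0 : V → A) = 1 := by
  ext q <;> simp [transPerm]

lemma transPerm_add (a b : V → A) : transPerm (a + b) = transPerm a * transPerm b := by
  ext q <;> simp [transPerm, add_assoc, add_comm (a q.1) (b q.1)]

lemma transPerm_neg (a : V → A) : transPerm (-a) = (transPerm a)⁻¹ := by
  rw [eq_inv_iff_mul_eq_one, ← transPerm_add, neg_add_cancel, transPerm_zero]

lemma graphS_eq_transPerm (d : V → V → A) (p : V × A) :
    graphS d p = transPerm (fun j => d p.1 j) := by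
  ext q <;> simp [transPerm, graphS, add_comm]

lemma transPerm_sub_rows (d : V → V → A) (v w : V) :
    transPerm (fun j => d v j - d w j) = graphS d (v, 0) * (graphS d (w, 0))⁻¹ := by
  rw [graphS_eq_transPerm, graphS_eq_transPerm, ← transPerm_neg, ← transPerm_add]
  congr 1
  funext j
  simp [sub_eq_add_neg]

end Aux

/-- identifying elements of `A^n` with translation permutations of
`V_n × A`, the displacement group of the quandle `V_n ×_d A` is exactly (the image of)
the subgroup of `A^n` generated by the differences `d_i − d_{i+1}` of consecutive rows
of the adjacency matrix, i.e. `{Σ k_i (d_i − d_{i+1}) : k_i ∈ ℤ}`. -/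
theorem dis_graph_quandle_eq (n : ℕ) (A : Type*) [AddCommGroup A]
    (d : Fin n → Fin n → A) (hd : ∀ v, d v v = 0) :
    ((graphQuandle (Fin n) A d hd).Dis : Set (Equiv.Perm (Fin n × A)))
      = (fun a => transPerm a) ''
        (AddSubgroup.closure {a : Fin n → A |
          ∃ (i : ℕ) (h : i + 1 < n),
            a = fun j => d ⟨i, Nat.lt_of_succ_lt h⟩ j - d ⟨i + 1, h⟩ j} :
          Set (Fin n → A)) := by
  set S : Set (Fin n → A) := {a : Fin n → A |
      ∃ (i : ℕ) (h : i + 1 < n),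
        a = fun j => d ⟨i, Nat.lt_of_succ_lt h⟩ j - d ⟨i + 1, h⟩ j} with hS
  set C := AddSubgroup.closure S with hC
  -- telescoping: every row difference lies in C
  have step : ∀ (k : ℕ) (v w : Fin n), (w : ℕ) = (v : ℕ) + k →
      (fun j => d v j - d w j) ∈ C := by
    intro k
    induction k with
    | zero =>
      intro v w hvw
      have : v = w := Fin.ext (by omega)
      subst this
      have : (fun j => d v j - d v j) = (0 : Fin n → A) := by
        funext j; simp
      rw [this]
      exact C.zero_mem
    | succ k ih =>
      intro v w hvw
      have hwlt := w.isLt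
      have hu : (v : ℕ) + k < n := by omega
      obtain ⟨wv, hwv⟩ := w
      simp only [Fin.val_mk] at hvw hwlt
      subst hvw
      have h1 : (fun j => d v j - d ⟨(v : ℕ) + k, hu⟩ j) ∈ C :=
        ih v ⟨(v : ℕ) + k, hu⟩ rfl
      have h2 : (fun j => d (⟨(v : ℕ) + k, hu⟩ : Fin n) j
          - d ⟨(v : ℕ) + (k + 1), hwlt⟩ j) ∈ C :=
        AddSubgroup.subset_closure ⟨(v : ℕ) + k, hwlt, rfl⟩
      have hmem := C.add_mem h1 h2
      convert hmem using 1
      funext j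
      simp [sub_add_sub_cancel]
  have diff_mem : ∀ v w : Fin n, (fun j => d v j - d w j) ∈ C := by
    intro v w
    rcases le_total (v : ℕ) (w : ℕ) with h | h
    · exact step ((w : ℕ) - (v : ℕ)) v w (by omega)
    · have := C.neg_mem (step ((v : ℕ) - (w : ℕ)) w v (by omega))
      convert this using 1
      funext j
      simp
  ext g
  constructor
  · intro hg
    refine Subgroup.closure_induction ?_ ?_ ?_ ?_ hg
    · rintro x ⟨p, q, rfl⟩
      exact ⟨fun j => d p.1 j - d q.1 j, diff_mem p.1 q.1, by
        simp only [graphQuandle, transPerm_sub_rows d p.1 q.1,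
          graphS_eq_transPerm]⟩
    · exact ⟨0, C.zero_mem, transPerm_zero⟩
    · rintro x y - - ⟨a, ha, rfl⟩ ⟨b, hb, rfl⟩
      exact ⟨a + b, C.add_mem ha hb, transPerm_add a b⟩
    · rintro x - ⟨a, ha, rfl⟩
      exact ⟨-a, C.neg_mem ha, transPerm_neg a⟩
  · rintro ⟨a, ha, rfl⟩
    refine AddSubgroup.closure_induction ?_ ?_ ?_ ?_ ha
    · rintro x ⟨i, h, rfl⟩
      apply Subgroup.subset_closure
      refine ⟨(⟨i, Nat.lt_of_succ_lt h⟩, 0), (⟨i + 1, h⟩, 0), ?_⟩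
      simpa only [graphQuandle] using
        transPerm_sub_rows d ⟨i, Nat.lt_of_succ_lt h⟩ ⟨i + 1, h⟩
    · show transPerm (0 : Fin n → A) ∈ ((graphQuandle (Fin n) A d hd).Dis : Set _)
      rw [transPerm_zero]
      exact Subgroup.one_mem _
    · rintro x y - - hx hy
      show transPerm (x + y) ∈ ((graphQuandle (Fin n) A d hd).Dis : Set _)
      rw [transPerm_add]
      exact Subgroup.mul_mem _ hx hy
    · rintro x - hx
      show transPerm (-x) ∈ ((graphQuandle (Fin n) A d hd).Dis : Set _)
      rw [transPerm_neg]
      exact Subgroup.inv_mem _ hx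
end

section
/- Let C_n (n ≥ 2) be the quandle on V_n × ℤ/2ℤ obtained from the weight d(v_i,v_j) = 1 if i − j ≡ 1 (mod n) and 0 otherwise. Then the quandle Euler characteristic of C_n is 2 if n is odd and 0 if n is even. -/
/-- The cyclic weight on `n` vertices: `d(v_i, v_j) = 1` iff `i − j ≡ 1 (mod n)`. -/
def cycleWeight (n : ℕ) : ZMod n → ZMod n → ZMod 2 :=
  fun i j => if i - j = 1 then 1 else 0

def Tperm (n : ℕ) (f : ZMod n → ZMod 2) : Equiv.Perm (ZMod n × ZMod 2) where
  toFun q := (q.1, f q.1 + q.2)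
  invFun q := (q.1, f q.1 + q.2)
  left_inv q := by
    have h : ∀ a : ZMod 2, a + a = 0 := by decide
    simp [← add_assoc, h]
  right_inv q := by
    have h : ∀ a : ZMod 2, a + a = 0 := by decide
    simp [← add_assoc, h]

lemma Tperm_mul (n : ℕ) (f g : ZMod n → ZMod 2) :
    Tperm n f * Tperm n g = Tperm n (f + g) := by
  apply Equiv.ext
  intro q
  simp [Tperm, Equiv.Perm.mul_apply, add_assoc]

lemma Tperm_zero (n : ℕ) : Tperm n 0 = 1 := by
  apply Equiv.ext; intro q; simp [Tperm]

lemma Tperm_inv (n : ℕ) (f : ZMod n → ZMod 2) : (Tperm n f)⁻¹ = Tperm n f := by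
  apply inv_eq_of_mul_eq_one_right
  rw [Tperm_mul]
  have h : ∀ a : ZMod 2, a + a = 0 := by decide
  have : f + f = 0 := by funext w; simp [h _]
  rw [this, Tperm_zero]

lemma graphS_eq (n : ℕ) (d : ZMod n → ZMod n → ZMod 2) (p : ZMod n × ZMod 2) :
    graphS d p = Tperm n (d p.1) := by
  apply Equiv.ext; intro q; rfl

/-- indicator function -/
def ind (n : ℕ) (a : ZMod n) : ZMod n → ZMod 2 := fun w => if w = a then 1 else 0

lemma cycleWeight_eq_ind (n : ℕ) (v : ZMod n) : cycleWeight n v = ind n (v - 1) := by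
  funext w
  simp only [cycleWeight, ind]
  congr 1
  simp only [eq_iff_iff]
  constructor
  · intro h; rw [← h]; ring
  · intro h; rw [h]; ring

lemma sum_ind (n : ℕ) [NeZero n] (a : ZMod n) : ∑ w : ZMod n, ind n a w = 1 := by
  simp [ind, Finset.sum_ite_eq']

section
variable (n : ℕ) [NeZero n]

/-- the subgroup of `Tperm f` with even f -/
def evenSubgroup : Subgroup (Equiv.Perm (ZMod n × ZMod 2)) where
  carrier := {g | ∃ f, (∑ w, f w) = 0 ∧ g = Tperm n f}
  one_mem' := ⟨0, by simp, (Tperm_zero n).symm⟩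
  mul_mem' := by
    rintro a b ⟨f, hf, rfl⟩ ⟨g, hg, rfl⟩
    exact ⟨f + g, by simp [Finset.sum_add_distrib, hf, hg], Tperm_mul n f g⟩
  inv_mem' := by
    rintro a ⟨f, hf, rfl⟩
    exact ⟨f, hf, (Tperm_inv n f)⟩

variable (hd : ∀ v : ZMod n, cycleWeight n v v = 0)

lemma dis_le_even :
    (graphQuandle (ZMod n) (ZMod 2) (cycleWeight n) hd).Dis ≤ evenSubgroup n := by
  apply (Subgroup.closure_le _).2
  rintro g ⟨x, y, rfl⟩
  show _ ∈ evenSubgroup n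
  have hx : (graphQuandle (ZMod n) (ZMod 2) (cycleWeight n) hd).s x
      = Tperm n (ind n (x.1 - 1)) := by
    show graphS _ x = _
    rw [graphS_eq, cycleWeight_eq_ind]
  have hy : (graphQuandle (ZMod n) (ZMod 2) (cycleWeight n) hd).s y
      = Tperm n (ind n (y.1 - 1)) := by
    show graphS _ y = _
    rw [graphS_eq, cycleWeight_eq_ind]
  refine ⟨ind n (x.1 - 1) + ind n (y.1 - 1), ?_, ?_⟩
  · have : (1 : ZMod 2) + 1 = 0 := by decide
    simp [Finset.sum_add_distrib, sum_ind, this]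
  · rw [hx, hy, Tperm_inv, Tperm_mul]

lemma ind_pair_mem_dis (a b : ZMod n) :
    Tperm n (ind n a + ind n b) ∈ (graphQuandle (ZMod n) (ZMod 2) (cycleWeight n) hd).Dis := by
  apply Subgroup.subset_closure
  refine ⟨(a + 1, 0), (b + 1, 0), ?_⟩
  have hx : (graphQuandle (ZMod n) (ZMod 2) (cycleWeight n) hd).s (a+1, (0:ZMod 2))
      = Tperm n (ind n a) := by
    show graphS _ _ = _
    rw [graphS_eq, cycleWeight_eq_ind]
    norm_num
  have hy : (graphQuandle (ZMod n) (ZMod 2) (cycleWeight n) hd).s (b+1, (0:ZMod 2))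
      = Tperm n (ind n b) := by
    show graphS _ _ = _
    rw [graphS_eq, cycleWeight_eq_ind]
    norm_num
  rw [hx, hy, Tperm_inv, Tperm_mul]
end

section
variable (n : ℕ) [NeZero n] (hd : ∀ v : ZMod n, cycleWeight n v v = 0)

lemma Tperm_apply (f : ZMod n → ZMod 2) (q : ZMod n × ZMod 2) :
    Tperm n f q = (q.1, f q.1 + q.2) := rfl

lemma even_mem_dis_aux : ∀ (k : ℕ) (f : ZMod n → ZMod 2),
    (Finset.univ.filter (fun w => f w ≠ 0)).card ≤ k → (∑ w, f w) = 0 →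
    Tperm n f ∈ (graphQuandle (ZMod n) (ZMod 2) (cycleWeight n) hd).Dis := by
  intro k
  induction k with
  | zero =>
    intro f hc hs
    have hf0 : f = 0 := by
      funext w
      by_contra hw
      have hmem : w ∈ Finset.univ.filter (fun w => f w ≠ 0) := by
        simp only [Finset.mem_filter, Finset.mem_univ, true_and]; exact hw
      have := Finset.card_pos.2 ⟨w, hmem⟩
      omega
    rw [hf0, Tperm_zero]; exact one_mem _
  | succ k ih =>
    intro f hc hs
    by_cases h0 : f = 0
    · rw [h0, Tperm_zero]; exact one_mem _
    · obtain ⟨a, ha⟩ : ∃ a, f a ≠ 0 := by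
        by_contra h; push_neg at h; exact h0 (funext h)
      have hone : ∀ x : ZMod 2, x ≠ 0 → x = 1 := by decide
      have ha1 : f a = 1 := hone _ ha
      obtain ⟨b, hba, hb1⟩ : ∃ b, b ≠ a ∧ f b = 1 := by
        by_contra h
        push_neg at h
        have hzero : ∀ x : ZMod 2, x ≠ 1 → x = 0 := by decide
        have hz : ∀ b ∈ Finset.univ, b ≠ a → f b = 0 := fun b _ hb => hzero _ (h b hb)
        have hsum : ∑ w, f w = f a := Finset.sum_eq_single a hz (by simp)
        rw [hs, ha1] at hsum
        exact absurd hsum (by decide)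
      set f' := f + ind n a + ind n b with hf'
      have h2 : ∀ u x y : ZMod 2, u + x + y + (x + y) = u := by decide
      have key : f = f' + (ind n a + ind n b) := by
        funext w
        simp only [hf', Pi.add_apply]
        rw [h2]
      have hf'a : f' a = 0 := by
        simp only [hf', Pi.add_apply, ind, if_pos rfl, if_neg (Ne.symm hba), ha1]
        decide
      have hf'b : f' b = 0 := by
        simp only [hf', Pi.add_apply, ind, if_pos rfl, if_neg hba, hb1]
        decide
      have hsub : Finset.univ.filter (fun w => f' w ≠ 0) ⊆
          (Finset.univ.filter (fun w => f w ≠ 0)).erase a := by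
        intro w hw
        simp only [Finset.mem_filter, Finset.mem_univ, true_and] at hw
        have hwa : w ≠ a := fun h => hw (h ▸ hf'a)
        have hwb : w ≠ b := fun h => hw (h ▸ hf'b)
        have : f' w = f w := by
          simp only [hf', Pi.add_apply, ind, if_neg hwa, if_neg hwb, add_zero]
        rw [this] at hw
        simp only [Finset.mem_erase, Finset.mem_filter, Finset.mem_univ, true_and]
        exact ⟨hwa, hw⟩
      have hmema : a ∈ Finset.univ.filter (fun w => f w ≠ 0) := by
        simp only [Finset.mem_filter, Finset.mem_univ, true_and]; exact ha
      have hcard : (Finset.univ.filter (fun w => f' w ≠ 0)).card ≤ k := by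
        have h1 := Finset.card_le_card hsub
        have h2 := Finset.card_erase_of_mem hmema
        have h3 := Finset.card_pos.2 ⟨a, hmema⟩
        omega
      have hsum' : ∑ w, f' w = 0 := by
        simp only [hf', Pi.add_apply, Finset.sum_add_distrib, hs, sum_ind, zero_add]
        decide
      rw [key, ← Tperm_mul]
      exact mul_mem (ih f' hcard hsum') (ind_pair_mem_dis n hd a b)

lemma even_mem_dis (f : ZMod n → ZMod 2) (hs : (∑ w, f w) = 0) :
    Tperm n f ∈ (graphQuandle (ZMod n) (ZMod 2) (cycleWeight n) hd).Dis :=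
  even_mem_dis_aux n hd _ f le_rfl hs

end

theorem chi_cycle_quandle' (n : ℕ) (hn : 2 ≤ n)
    (hd : ∀ v : ZMod n, cycleWeight n v v = 0) :
    sInf {m | ∃ g ∈ (graphQuandle (ZMod n) (ZMod 2) (cycleWeight n) hd).Dis,
        m = Nat.card {x : ZMod n × ZMod 2 // g x = x}}
      = if Odd n then 2 else 0 := by
  haveI : NeZero n := ⟨by omega⟩
  have hcast : (n : ZMod 2) = ((n % 2 : ℕ) : ZMod 2) := (ZMod.natCast_mod n 2).symm
  by_cases hodd : Odd n
  · rw [if_pos hodd]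
    have hn2 : (n : ZMod 2) = 1 := by
      rw [hcast, Nat.odd_iff.mp hodd]; norm_num
    set f₀ : ZMod n → ZMod 2 := fun w => if w = 0 then 0 else 1 with hf₀
    have hsum : ∑ w, f₀ w = 0 := by
      have heq : ∀ w, f₀ w = 1 + ind n 0 w := by
        intro w
        by_cases h : w = 0 <;> simp [hf₀, ind, h] <;> decide
      rw [Finset.sum_congr rfl (fun w _ => heq w)]
      rw [Finset.sum_add_distrib, sum_ind, Finset.sum_const, Finset.card_univ, ZMod.card,
        nsmul_eq_mul, mul_one, hn2]
      decide
    have hg : Tperm n f₀ ∈ (graphQuandle (ZMod n) (ZMod 2) (cycleWeight n) hd).Dis :=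
      even_mem_dis n hd f₀ hsum
    have hfix : ∀ x : ZMod n × ZMod 2, Tperm n f₀ x = x ↔ x.1 = 0 := by
      rintro ⟨w, b⟩
      rw [Tperm_apply, Prod.mk.injEq]
      simp only [true_and]
      constructor
      · intro h
        by_contra hw
        simp only [hf₀, if_neg hw] at h
        have : (1 : ZMod 2) + b ≠ b := by revert b; decide
        exact this h
      · intro h; simp [hf₀, h]
    have hcard : Nat.card {x : ZMod n × ZMod 2 // Tperm n f₀ x = x} = 2 := by
      have e : {x : ZMod n × ZMod 2 // Tperm n f₀ x = x} ≃ ZMod 2 :=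
        { toFun := fun x => x.1.2
          invFun := fun b => ⟨(0, b), (hfix _).2 rfl⟩
          left_inv := fun x => Subtype.ext (Prod.ext ((hfix x.1).1 x.2).symm rfl)
          right_inv := fun b => rfl }
      rw [Nat.card_congr e, Nat.card_eq_fintype_card, ZMod.card]
    have hmem : 2 ∈ {m | ∃ g ∈ (graphQuandle (ZMod n) (ZMod 2) (cycleWeight n) hd).Dis,
        m = Nat.card {x : ZMod n × ZMod 2 // g x = x}} := ⟨Tperm n f₀, hg, hcard.symm⟩
    refine le_antisymm (Nat.sInf_le hmem) (le_csInf ⟨2, hmem⟩ ?_)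
    rintro m ⟨g, hgDis, rfl⟩
    obtain ⟨f, hfsum, rfl⟩ := dis_le_even n hd hgDis
    obtain ⟨w, hw⟩ : ∃ w, f w = 0 := by
      by_contra h
      push_neg at h
      have hone : ∀ x : ZMod 2, x ≠ 0 → x = 1 := by decide
      have : ∑ w, f w = (n : ZMod 2) := by
        rw [Finset.sum_congr rfl (fun w _ => hone _ (h w)), Finset.sum_const,
          Finset.card_univ, ZMod.card, nsmul_eq_mul, mul_one]
      rw [hfsum, hn2] at this
      exact absurd this (by decide)
    have hfix1 : Tperm n f (w, 0) = (w, 0) := by rw [Tperm_apply]; simp [hw]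
    have hfix2 : Tperm n f (w, 1) = (w, 1) := by rw [Tperm_apply]; simp [hw]
    rw [Nat.card_eq_fintype_card]
    refine Fintype.one_lt_card_iff.2 ⟨⟨(w, 0), hfix1⟩, ⟨(w, 1), hfix2⟩, ?_⟩
    simp only [ne_eq, Subtype.mk.injEq, Prod.mk.injEq, true_and]
    decide
  · rw [if_neg hodd]
    have hn2 : (n : ZMod 2) = 0 := by
      rw [hcast, Nat.even_iff.mp (Nat.not_odd_iff_even.mp hodd)]
      norm_num
    set f₁ : ZMod n → ZMod 2 := fun _ => 1 with hf₁
    have hsum : ∑ w, f₁ w = 0 := by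
      rw [hf₁]
      rw [Finset.sum_const, Finset.card_univ, ZMod.card, nsmul_eq_mul, mul_one, hn2]
    have hg : Tperm n f₁ ∈ (graphQuandle (ZMod n) (ZMod 2) (cycleWeight n) hd).Dis :=
      even_mem_dis n hd f₁ hsum
    haveI : IsEmpty {x : ZMod n × ZMod 2 // Tperm n f₁ x = x} := by
      refine ⟨fun x => ?_⟩
      have := congrArg Prod.snd x.2
      rw [Tperm_apply] at this
      simp only [hf₁] at this
      have h1 : ∀ b : ZMod 2, 1 + b ≠ b := by decide
      exact h1 _ this
    have hcard : Nat.card {x : ZMod n × ZMod 2 // Tperm n f₁ x = x} = 0 :=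
      Nat.card_of_isEmpty
    exact Nat.sInf_eq_zero.mpr (Or.inl ⟨Tperm n f₁, hg, hcard.symm⟩)

/-- for `n ≥ 2`, the quandle `C_n = V_n ×_d (ℤ/2ℤ)` given by the cyclic
weight `d(v_i,v_j) = 1` iff `i − j ≡ 1 (mod n)` has quandle Euler characteristic `2`
if `n` is odd and `0` if `n` is even. (The hypothesis `hd`, that `d` vanishes on the
diagonal, is automatic for `n ≥ 2`.) -/
theorem chi_cycle_quandle (n : ℕ) (hn : 2 ≤ n)
    (hd : ∀ v : ZMod n, cycleWeight n v v = 0) :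
    (graphQuandle (ZMod n) (ZMod 2) (cycleWeight n) hd).chi
      = if Odd n then 2 else 0 := by
  rw [QuandleStr.chi]
  exact chi_cycle_quandle' n hn hd
end

section
/- For every integer n > 1, there exists a nontrivial quandle whose quandle Euler characteristic equals n; for instance the quandle B_n on {v_1,v_2} × ℤ/nℤ with weight d(v_1,v_2)=1 and all other weights 0 has χ(B_n) = n. -/
/-- The weight on two vertices with `d(v_1, v_2) = 1` and all other weights `0`. -/
def arcWeight (n : ℕ) : Fin 2 → Fin 2 → ZMod n :=
  fun i j => if i = 0 ∧ j = 1 then 1 else 0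

lemma arcWeight_diag (n : ℕ) : ∀ v : Fin 2, arcWeight n v v = 0 := by
  intro v
  fin_cases v <;> simp [arcWeight]

/-- The quandle `B_n` on `{v_1, v_2} × ℤ/nℤ` obtained from the weight `arcWeight n`. -/
def Bq (n : ℕ) : QuandleStr (Fin 2 × ZMod n) :=
  graphQuandle (Fin 2) (ZMod n) (arcWeight n) (arcWeight_diag n)

section Aux

lemma arcWeight_zero_right (n : ℕ) (v : Fin 2) : arcWeight n v 0 = 0 := by
  simp [arcWeight]

lemma Bq_s_apply (n : ℕ) (p q : Fin 2 × ZMod n) :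
    (Bq n).s p q = (q.1, arcWeight n p.1 q.1 + q.2) := rfl

lemma Bq_dis_fixes (n : ℕ) {g : Equiv.Perm (Fin 2 × ZMod n)} (hg : g ∈ (Bq n).Dis)
    (b : ZMod n) : g (0, b) = (0, b) := by
  induction hg using Subgroup.closure_induction with
  | mem g hg =>
      obtain ⟨x, y, rfl⟩ := hg
      have h1 : ((Bq n).s y)⁻¹ (0, b) = (0, b) := by
        apply ((Bq n).s y).injective
        simp [Bq_s_apply, arcWeight_zero_right]
      rw [Equiv.Perm.mul_apply, h1]; simp [Bq_s_apply, arcWeight_zero_right]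
  | one => rfl
  | mul g h _ _ ihg ihh => simp [ihg, ihh]
  | inv g _ ih => exact g.injective (by simp [ih])

/-- Fixed points of `s (0,0)` are exactly the fiber over `0`. -/
def fixEquiv (n : ℕ) [NeZero n] [Fact (1 < n)] :
    ZMod n ≃ {x : Fin 2 × ZMod n // (Bq n).s (0, 0) x = x} where
  toFun b := ⟨(0, b), by simp [Bq_s_apply, arcWeight]⟩
  invFun x := x.1.2
  left_inv b := rfl
  right_inv x := by
    obtain ⟨⟨v, b⟩, hx⟩ := x
    have : v = 0 := by
      fin_cases v
      · rfl
      · exfalso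
        simp [Bq_s_apply, arcWeight, Prod.ext_iff] at hx
    subst this
    rfl

end Aux

/-- for every integer `n > 1` there is a nontrivial quandle whose quandle
Euler characteristic is `n`; indeed the quandle `B_n` is nontrivial and `χ(B_n) = n`. -/
theorem exists_nontrivial_quandle_chi_eq (n : ℕ) (hn : 1 < n) :
    ((∃ x, (Bq n).s x ≠ 1) ∧ (Bq n).chi = n) ∧
    ∃ (X : Type) (Q : QuandleStr X), (∃ x, Q.s x ≠ 1) ∧ Q.chi = n := by
  haveI : NeZero n := ⟨by omega⟩
  haveI : Fact (1 < n) := ⟨hn⟩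
  have hmain : (∃ x, (Bq n).s x ≠ 1) ∧ (Bq n).chi = n := by
    constructor
    · refine ⟨(0, 0), fun h => ?_⟩
      have := congrArg (fun f => (f : Equiv.Perm (Fin 2 × ZMod n)) (1, 0)) h
      simp [Bq_s_apply, arcWeight, Prod.ext_iff] at this
    · have hmem : (Bq n).s (0, 0) ∈ (Bq n).Dis := by
        have h1 : ((Bq n).s (1, 0) : Equiv.Perm (Fin 2 × ZMod n)) = 1 := by
          ext q
          · rfl
          · simp [Bq_s_apply, arcWeight]
      -- s(1,0) = 1
        have : (Bq n).s (0,0) = (Bq n).s (0,0) * ((Bq n).s (1,0))⁻¹ := by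
          rw [h1]; simp
        rw [this]
        exact Subgroup.subset_closure ⟨(0,0), (1,0), rfl⟩
      have hcard : Nat.card {x : Fin 2 × ZMod n // (Bq n).s (0, 0) x = x} = n := by
        rw [← Nat.card_congr (fixEquiv n), Nat.card_zmod]
      apply le_antisymm
      · exact Nat.sInf_le ⟨_, hmem, hcard.symm⟩
      · have hne : (n:ℕ) ∈ {m | ∃ g ∈ (Bq n).Dis, m = Nat.card {x : Fin 2 × ZMod n // g x = x}} := ⟨_, hmem, hcard.symm⟩
        apply le_csInf ⟨n, hne⟩
        rintro m ⟨g, hg, rfl⟩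
        have hinj : Function.Injective
            (fun b : ZMod n => (⟨(0, b), Bq_dis_fixes n hg b⟩ :
              {x : Fin 2 × ZMod n // g x = x})) := by
          intro a b hab
          simpa [Prod.ext_iff] using hab
        calc n = Nat.card (ZMod n) := (Nat.card_zmod n).symm
          _ ≤ _ := Nat.card_le_card_of_injective _ hinj
  exact ⟨hmain, ⟨_, Bq n, hmain⟩⟩
end

section
/- The quandle Euler characteristic is multiplicative under direct products: χ(X₁ × X₂) = χ(X₁) · χ(X₂) for quandles X₁, X₂ (e.g., finite quandles). -/
/-- The direct product quandle `X₁ × X₂`, with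
`s (x₁,x₂) (y₁,y₂) = (s¹ x₁ y₁, s² x₂ y₂)`. -/
def prodQuandle {X1 X2 : Type*} (Q1 : QuandleStr X1) (Q2 : QuandleStr X2) :
    QuandleStr (X1 × X2) where
  s p := Equiv.prodCongr (Q1.s p.1) (Q2.s p.2)
  fix p := by cases p with | mk a b => simp [Q1.fix, Q2.fix]
  dist p q r := by
    cases r with
    | mk a b =>
      simp only [Equiv.prodCongr_apply, Prod.map]
      exact congrArg₂ Prod.mk (Q1.dist p.1 q.1 a) (Q2.dist p.2 q.2 b)

lemma s_mem_Inn {X : Type*} (Q : QuandleStr X) (x : X) : Q.s x ∈ Q.Inn :=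
  Subgroup.subset_closure ⟨x, rfl⟩

/-- The monoid hom pairing two permutations into a permutation of the product. -/
def prodCongrHom' (X1 X2 : Type*) :
    Equiv.Perm X1 × Equiv.Perm X2 →* Equiv.Perm (X1 × X2) where
  toFun g := Equiv.prodCongr g.1 g.2
  map_one' := by ext p <;> rfl
  map_mul' a b := by ext p <;> rfl

lemma dis_prod {X1 X2 : Type*} [Nonempty X1] [Nonempty X2]
    (Q1 : QuandleStr X1) (Q2 : QuandleStr X2) :
    (prodQuandle Q1 Q2).Dis = (Q1.Dis.prod Q2.Dis).map (prodCongrHom' X1 X2) := by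
  unfold QuandleStr.Dis
  rw [← Subgroup.closure_prod, MonoidHom.map_closure]
  · congr 1
    ext g
    constructor
    · rintro ⟨x, y, rfl⟩
      exact ⟨(Q1.s x.1 * (Q1.s y.1)⁻¹, Q2.s x.2 * (Q2.s y.2)⁻¹),
        ⟨⟨x.1, y.1, rfl⟩, ⟨x.2, y.2, rfl⟩⟩, by ext p <;> rfl⟩
    · rintro ⟨⟨g1, g2⟩, ⟨⟨x1, y1, rfl⟩, ⟨x2, y2, rfl⟩⟩, rfl⟩
      exact ⟨(x1, x2), (y1, y2), by ext p <;> rfl⟩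
  · obtain ⟨x⟩ := ‹Nonempty X1›
    exact ⟨x, x, (mul_inv_cancel _).symm⟩
  · obtain ⟨x⟩ := ‹Nonempty X2›
    exact ⟨x, x, (mul_inv_cancel _).symm⟩

lemma fix_card_prod {X1 X2 : Type*} (g1 : Equiv.Perm X1) (g2 : Equiv.Perm X2) :
    Nat.card {p : X1 × X2 // (prodCongrHom' X1 X2) (g1, g2) p = p}
      = Nat.card {x : X1 // g1 x = x} * Nat.card {y : X2 // g2 y = y} := by
  rw [← Nat.card_prod]
  apply Nat.card_congr
  exact (Equiv.subtypeEquivRight (fun p => by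
    simp [prodCongrHom', Prod.ext_iff])).trans Equiv.subtypeProdEquivProd

lemma chi_set_nonempty {X : Type*} (Q : QuandleStr X) :
    {m | ∃ g ∈ Q.Dis, m = Nat.card {x : X // g x = x}}.Nonempty :=
  ⟨_, 1, Q.Dis.one_mem, rfl⟩

lemma chi_eq_zero_of_isEmpty {X : Type*} [IsEmpty X] (Q : QuandleStr X) : Q.chi = 0 := by
  have : (0 : ℕ) ∈ {m | ∃ g ∈ Q.Dis, m = Nat.card {x : X // g x = x}} :=
    ⟨1, Q.Dis.one_mem, by simp [Nat.card_eq_zero_of_infinite, Nat.card_of_isEmpty]⟩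
  exact Nat.eq_zero_of_le_zero (Nat.sInf_le this)

/-- the quandle Euler characteristic is multiplicative under direct
products: `χ(X₁ × X₂) = χ(X₁) · χ(X₂)`. -/
theorem chi_prod_quandle {X1 X2 : Type*} (Q1 : QuandleStr X1) (Q2 : QuandleStr X2) :
    (prodQuandle Q1 Q2).chi = Q1.chi * Q2.chi := by
  rcases isEmpty_or_nonempty X1 with h1 | h1
  · haveI : IsEmpty (X1 × X2) := inferInstance
    rw [chi_eq_zero_of_isEmpty, chi_eq_zero_of_isEmpty, zero_mul]
  rcases isEmpty_or_nonempty X2 with h2 | h2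
  · haveI : IsEmpty (X1 × X2) := inferInstance
    rw [chi_eq_zero_of_isEmpty, chi_eq_zero_of_isEmpty (Q := Q2), mul_zero]
  -- main case
  set S1 := {m | ∃ g ∈ Q1.Dis, m = Nat.card {x : X1 // g x = x}} with hS1
  set S2 := {m | ∃ g ∈ Q2.Dis, m = Nat.card {y : X2 // g y = y}} with hS2
  have hmem1 := Nat.sInf_mem (chi_set_nonempty Q1)
  have hmem2 := Nat.sInf_mem (chi_set_nonempty Q2)
  obtain ⟨g1, hg1, he1⟩ := hmem1
  obtain ⟨g2, hg2, he2⟩ := hmem2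
  have hdesc : {m | ∃ g ∈ (prodQuandle Q1 Q2).Dis, m = Nat.card {p : X1 × X2 // g p = p}}
      = {m | ∃ g1 ∈ Q1.Dis, ∃ g2 ∈ Q2.Dis,
          m = Nat.card {x : X1 // g1 x = x} * Nat.card {y : X2 // g2 y = y}} := by
    ext m
    constructor
    · rintro ⟨g, hg, rfl⟩
      rw [dis_prod] at hg
      obtain ⟨⟨a1, a2⟩, ⟨ha1, ha2⟩, rfl⟩ := hg
      exact ⟨a1, ha1, a2, ha2, fix_card_prod a1 a2⟩
    · rintro ⟨a1, ha1, a2, ha2, rfl⟩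
      refine ⟨(prodCongrHom' X1 X2) (a1, a2), ?_, (fix_card_prod a1 a2).symm⟩
      rw [dis_prod]
      exact ⟨(a1, a2), ⟨ha1, ha2⟩, rfl⟩
  unfold QuandleStr.chi
  rw [hdesc]
  apply le_antisymm
  · refine Nat.sInf_le ⟨g1, hg1, g2, hg2, ?_⟩
    rw [he1, he2]
  · refine le_csInf ⟨_, g1, hg1, g2, hg2, rfl⟩ ?_
    rintro m ⟨a1, ha1, a2, ha2, rfl⟩
    exact Nat.mul_le_mul (Nat.sInf_le ⟨a1, ha1, rfl⟩) (Nat.sInf_le ⟨a2, ha2, rfl⟩)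
end

section
/- For quandles X₁, X₂, the quandle Euler characteristic of the interaction-free union satisfies the subadditivity inequality χ(X₁ ⊔ᶠʳᵉᵉ X₂) ≤ χ(X₁) + χ(X₂). -/
/-- The point symmetries of the interaction-free union: a symmetry of one component acts
trivially on the other. -/
def freeS {X1 X2 : Type*} (Q1 : QuandleStr X1) (Q2 : QuandleStr X2) :
    X1 ⊕ X2 → Equiv.Perm (X1 ⊕ X2)
  | .inl a => Equiv.sumCongr (Q1.s a) (Equiv.refl X2)
  | .inr b => Equiv.sumCongr (Equiv.refl X1) (Q2.s b)

/-- The interaction-free union of two quandles. -/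
def freeUnion {X1 X2 : Type*} (Q1 : QuandleStr X1) (Q2 : QuandleStr X2) :
    QuandleStr (X1 ⊕ X2) where
  s := freeS Q1 Q2
  fix x := by cases x <;> simp [freeS, Q1.fix, Q2.fix]
  dist x y z := by
    cases x <;> cases y <;> cases z <;>
      simp only [freeS, Equiv.sumCongr_apply, Sum.map_inl, Sum.map_inr, Equiv.refl_apply] <;>
      first
        | rw [Q1.dist]
        | rw [Q2.dist]

lemma card_sum_le (α β : Type*) : Nat.card (α ⊕ β) ≤ Nat.card α + Nat.card β := by
  by_cases h : Finite (α ⊕ β)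
  · have h1 : Finite α := Finite.of_injective (Sum.inl : α → α ⊕ β) Sum.inl_injective
    have h2 : Finite β := Finite.of_injective (Sum.inr : β → α ⊕ β) Sum.inr_injective
    exact (Nat.card_sum).le
  · have : Infinite (α ⊕ β) := not_finite_iff_infinite.mp h
    rw [Nat.card_eq_zero_of_infinite]
    exact Nat.zero_le _

/-- Monoid hom embedding permutations of the left factor. -/
def inlHom (X1 X2 : Type*) : Equiv.Perm X1 →* Equiv.Perm (X1 ⊕ X2) where
  toFun g := Equiv.sumCongr g (Equiv.refl X2)
  map_one' := by ext x; cases x <;> rfl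
  map_mul' g h := by ext x; cases x <;> rfl

def inrHom (X1 X2 : Type*) : Equiv.Perm X2 →* Equiv.Perm (X1 ⊕ X2) where
  toFun g := Equiv.sumCongr (Equiv.refl X1) g
  map_one' := by ext x; cases x <;> rfl
  map_mul' g h := by ext x; cases x <;> rfl

lemma inl_mem_dis {X1 X2 : Type*} (Q1 : QuandleStr X1) (Q2 : QuandleStr X2)
    {g : Equiv.Perm X1} (hg : g ∈ Q1.Dis) :
    Equiv.sumCongr g (Equiv.refl X2) ∈ (freeUnion Q1 Q2).Dis := by
  have : inlHom X1 X2 g ∈ (freeUnion Q1 Q2).Dis := by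
    apply Subgroup.closure_induction (p := fun x _ => inlHom X1 X2 x ∈ (freeUnion Q1 Q2).Dis)
      (fun x hx => ?_) (by rw [map_one]; exact one_mem _)
      (fun x y _ _ hx hy => by rw [map_mul]; exact mul_mem hx hy)
      (fun x _ hx => by rw [map_inv]; exact inv_mem hx) hg
    obtain ⟨a, b, rfl⟩ := hx
    apply Subgroup.subset_closure
    exact ⟨Sum.inl a, Sum.inl b, by simp [freeUnion, freeS, inlHom, map_mul]; exact rfl⟩
  exact this

lemma inr_mem_dis {X1 X2 : Type*} (Q1 : QuandleStr X1) (Q2 : QuandleStr X2)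
    {g : Equiv.Perm X2} (hg : g ∈ Q2.Dis) :
    Equiv.sumCongr (Equiv.refl X1) g ∈ (freeUnion Q1 Q2).Dis := by
  have : inrHom X1 X2 g ∈ (freeUnion Q1 Q2).Dis := by
    apply Subgroup.closure_induction (p := fun x _ => inrHom X1 X2 x ∈ (freeUnion Q1 Q2).Dis)
      (fun x hx => ?_) (by rw [map_one]; exact one_mem _)
      (fun x y _ _ hx hy => by rw [map_mul]; exact mul_mem hx hy)
      (fun x _ hx => by rw [map_inv]; exact inv_mem hx) hg
    obtain ⟨a, b, rfl⟩ := hx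
    apply Subgroup.subset_closure
    exact ⟨Sum.inr a, Sum.inr b, by simp [freeUnion, freeS, inrHom, map_mul]; exact rfl⟩
  exact this

/-- subadditivity of the quandle Euler characteristic for the
interaction-free union: `χ(X₁ ⊔ᶠʳᵉᵉ X₂) ≤ χ(X₁) + χ(X₂)`. -/
theorem chi_free_union_le {X1 X2 : Type*} (Q1 : QuandleStr X1) (Q2 : QuandleStr X2) :
    (freeUnion Q1 Q2).chi ≤ Q1.chi + Q2.chi := by
  have hne1 : {m | ∃ g ∈ Q1.Dis, m = Nat.card {x : X1 // g x = x}}.Nonempty :=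
    ⟨_, 1, one_mem _, rfl⟩
  have hne2 : {m | ∃ g ∈ Q2.Dis, m = Nat.card {x : X2 // g x = x}}.Nonempty :=
    ⟨_, 1, one_mem _, rfl⟩
  obtain ⟨g1, hg1, hc1⟩ := Nat.sInf_mem hne1
  obtain ⟨g2, hg2, hc2⟩ := Nat.sInf_mem hne2
  have hmem : Equiv.sumCongr g1 g2 ∈ (freeUnion Q1 Q2).Dis := by
    have : Equiv.sumCongr g1 g2 =
        Equiv.sumCongr g1 (Equiv.refl X2) * Equiv.sumCongr (Equiv.refl X1) g2 := by
      ext x; cases x <;> rfl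
    rw [this]
    exact mul_mem (inl_mem_dis Q1 Q2 hg1) (inr_mem_dis Q1 Q2 hg2)
  have key : (freeUnion Q1 Q2).chi ≤ Nat.card {x : X1 ⊕ X2 // Equiv.sumCongr g1 g2 x = x} :=
    Nat.sInf_le ⟨_, hmem, rfl⟩
  refine key.trans ?_
  have e : {x : X1 ⊕ X2 // Equiv.sumCongr g1 g2 x = x} ≃
      {x : X1 // g1 x = x} ⊕ {x : X2 // g2 x = x} := by
    refine Equiv.subtypeSum.trans (Equiv.sumCongr ?_ ?_)
    · exact Equiv.subtypeEquivRight fun a => by simp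
    · exact Equiv.subtypeEquivRight fun b => by simp
  rw [Nat.card_congr e, QuandleStr.chi, QuandleStr.chi, hc1, hc2]
  exact card_sum_le _ _
end

section
/- The subadditivity of the quandle Euler characteristic for interaction-free unions can be strict: for the quandle C₃ (on {v₁,v₂,v₃} × ℤ/2ℤ with cyclic weight d(v_i,v_j)=1 iff i−j≡1 mod 3), one has χ(C₃ ⊔ᶠʳᵉᵉ C₃) = 0 while χ(C₃) + χ(C₃) = 4. -/
lemma cycleWeight3_diag : ∀ v : ZMod 3, cycleWeight 3 v v = 0 := by decide

/-- The quandle `C₃` on `{v₁,v₂,v₃} × ℤ/2ℤ` with cyclic weight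
`d(v_i,v_j) = 1` iff `i − j ≡ 1 (mod 3)`. -/
def C3 : QuandleStr (ZMod 3 × ZMod 2) :=
  graphQuandle (ZMod 3) (ZMod 2) (cycleWeight 3) cycleWeight3_diag

/-- The subgroup of permutations of `ZMod 3 × ZMod 2` that fix the first coordinate and
translate the second by an "even" function of the first. -/
def H3 : Subgroup (Equiv.Perm (ZMod 3 × ZMod 2)) where
  carrier := {g | ∃ f : ZMod 3 → ZMod 2, f 0 + f 1 + f 2 = 0 ∧ ∀ p, g p = (p.1, f p.1 + p.2)}
  one_mem' := ⟨0, by simp, fun p => by simp⟩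
  mul_mem' := by
    rintro g g' ⟨f, hf, hg⟩ ⟨f', hf', hg'⟩
    refine ⟨f + f', ?_, fun p => ?_⟩
    · simp only [Pi.add_apply]
      linear_combination hf + hf'
    · simp only [Equiv.Perm.mul_apply, hg', hg, Pi.add_apply]
      ring_nf
  inv_mem' := by
    rintro g ⟨f, hf, hg⟩
    refine ⟨f, hf, fun p => ?_⟩
    apply g.injective
    rw [Equiv.Perm.inv_def, Equiv.apply_symm_apply, hg]
    have h2 : ∀ a : ZMod 2, a + a = 0 := by decide
    simp [← add_assoc, h2]

lemma dis_le_H3 : C3.Dis ≤ H3 := by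
  rw [QuandleStr.Dis, Subgroup.closure_le]
  rintro g ⟨x, y, rfl⟩
  refine ⟨fun w => cycleWeight 3 x.1 w - cycleWeight 3 y.1 w, ?_, fun p => ?_⟩
  · revert x y
    have : ∀ v u : ZMod 3,
        (cycleWeight 3 v 0 - cycleWeight 3 u 0) + (cycleWeight 3 v 1 - cycleWeight 3 u 1)
          + (cycleWeight 3 v 2 - cycleWeight 3 u 2) = 0 := by decide
    exact fun x y => this x.1 y.1
  · show (C3.s x) ((C3.s y)⁻¹ p) = _
    simp only [C3, graphQuandle, graphS, Equiv.coe_fn_mk, Equiv.Perm.inv_def, Equiv.coe_fn_symm_mk]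
    ring_nf

lemma two_le_fix {g : Equiv.Perm (ZMod 3 × ZMod 2)} (hg : g ∈ C3.Dis) :
    2 ≤ Nat.card {x : ZMod 3 × ZMod 2 // g x = x} := by
  obtain ⟨f, hf, hgf⟩ := dis_le_H3 hg
  have hw : ∃ w, f w = 0 := by
    by_contra h
    push_neg at h
    have h1 : ∀ a : ZMod 2, a ≠ 0 → a = 1 := by decide
    rw [h1 _ (h 0), h1 _ (h 1), h1 _ (h 2)] at hf
    exact absurd hf (by decide)
  obtain ⟨w, hfw⟩ := hw
  rw [Nat.card_eq_fintype_card]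
  refine Fintype.one_lt_card_iff_nontrivial.mpr ⟨⟨(w, 0), by rw [hgf]; simp [hfw]⟩,
    ⟨(w, 1), by rw [hgf]; simp [hfw]⟩, by simp⟩

theorem chi_C3 : C3.chi = 2 := by
  refine le_antisymm ?_ (le_csInf ⟨6, 1, one_mem _, by
      rw [Nat.card_eq_fintype_card]; decide⟩ ?_)
  · apply Nat.sInf_le
    refine ⟨C3.s (0, 0) * (C3.s (1, 0))⁻¹,
      Subgroup.subset_closure ⟨(0, 0), (1, 0), rfl⟩, ?_⟩
    rw [Nat.card_eq_fintype_card]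
    decide
  · rintro m ⟨g, hg, rfl⟩
    exact two_le_fix hg

theorem chi_free : (freeUnion C3 C3).chi = 0 := by
  set Q := freeUnion C3 C3
  have mem : ∀ i : ZMod 3, Q.s (.inl (i, 0)) * (Q.s (.inr (i, 0)))⁻¹ ∈ Q.Dis :=
    fun i => Subgroup.subset_closure ⟨.inl (i, 0), .inr (i, 0), rfl⟩
  set g := (Q.s (.inl ((0:ZMod 3), 0)) * (Q.s (.inr (0, 0)))⁻¹)
    * (Q.s (.inl (1, 0)) * (Q.s (.inr (1, 0)))⁻¹)
    * (Q.s (.inl (2, 0)) * (Q.s (.inr (2, 0)))⁻¹) with hgdef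
  have hgmem : g ∈ Q.Dis := mul_mem (mul_mem (mem 0) (mem 1)) (mem 2)
  have hnofix : ∀ x, g x ≠ x := by decide
  rw [QuandleStr.chi, Nat.sInf_eq_zero]
  left
  refine ⟨g, hgmem, ?_⟩
  have : IsEmpty {x // g x = x} := ⟨fun ⟨x, hx⟩ => hnofix x hx⟩
  rw [Nat.card_of_isEmpty]


/-- subadditivity for interaction-free unions can be strict:
`χ(C₃ ⊔ᶠʳᵉᵉ C₃) = 0` while `χ(C₃) + χ(C₃) = 4`. -/
theorem chi_free_union_strict :
    (freeUnion C3 C3).chi = 0 ∧ C3.chi + C3.chi = 4 := by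
  exact ⟨chi_free, by rw [chi_C3]⟩
end
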